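/- arXiv:2303.07645 — 7 statements merged into one kernel-verified Lean document; each statement's English description precedes it below -/
import Mathlib

section
/- Every Hamiltonian cubic graph admits a pair-oriented labeling: if G is a finite simple graph with m edges in which every vertex has degree exactly 3 and which contains a Hamiltonian cycle, then there exist an orientation of the edges of G and a bijective labeling of the edges of G by the integers 1, …, m such that every vertex v has two incident edges that are both oriented out of v or both oriented into v and whose labels are consecutive integers (differ by exactly one). -/
/-!
Along a trail `v₀ v₁ … v_k`, give the edge `vᵢvᵢ₊₁` the label `i` and orient the edges
alternately forwards and backwards. Then at every interior vertex `vᵢ₊₁` the two trail edges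
`vᵢvᵢ₊₁` and `vᵢ₊₁vᵢ₊₂` carry consecutive labels and both point out of `vᵢ₊₁` or both into it.
In a cubic graph with a Hamiltonian cycle `a … a`, the base vertex `a` has a third edge `wa`
off the cycle, and the trail `w a … a` has every vertex as an interior vertex.
-/

theorem List.Nodup.exists_equiv_fin_extend {β : Type*} [DecidableEq β] {s : Set β} [Fintype s]
    {L : List β} (hL : L.Nodup) (hLs : ∀ b ∈ L, b ∈ s) :
    ∃ e : s ≃ Fin (Fintype.card s),
      ∀ (i : ℕ) (hi : i < L.length), (e ⟨L[i], hLs _ (L.getElem_mem hi)⟩ : ℕ) = i := by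
  have hlen : L.length ≤ Fintype.card s := by
    rw [← List.toFinset_card_of_nodup hL, ← Set.toFinset_card]
    exact Finset.card_le_card fun b hb => Set.mem_toFinset.2 (hLs b (List.mem_toFinset.1 hb))
  obtain ⟨e, he⟩ := Set.MapsTo.exists_equiv_extend_of_card_eq (Finset.card_range _).symm
    (s := {b : s | (b : β) ∈ L}) (f := fun b => L.idxOf (b : β))
    (fun b hb => Finset.mem_range.2 ((List.idxOf_lt_length_of_mem hb).trans_le hlen))
    (fun b hb c _ hbc => Subtype.ext ((List.idxOf_inj hb).1 hbc))
  refine ⟨e.trans ((Equiv.subtypeEquivRight fun _ => Finset.mem_range).trans Fin.equivSubtype.symm),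
    fun i hi => ?_⟩
  simpa [he ⟨L[i], hLs _ (L.getElem_mem hi)⟩ (L.getElem_mem hi)] using hL.idxOf_getElem i hi

namespace SimpleGraph

variable {V : Type*}

def alternatingOrient (f : ℕ → V) (i : ℕ) : V × V :=
  if Even i then (f i, f (i + 1)) else (f (i + 1), f i)

theorem mk_alternatingOrient (f : ℕ → V) (i : ℕ) :
    s((alternatingOrient f i).1, (alternatingOrient f i).2) = s(f i, f (i + 1)) := by
  unfold alternatingOrient
  split_ifs
  · rfl
  · exact Sym2.eq_swap

theorem alternatingOrient_agree_at_succ (f : ℕ → V) (i : ℕ) :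
    ((alternatingOrient f i).1 = f (i + 1) ∧ (alternatingOrient f (i + 1)).1 = f (i + 1)) ∨
      ((alternatingOrient f i).2 = f (i + 1) ∧ (alternatingOrient f (i + 1)).2 = f (i + 1)) := by
  rcases Nat.even_or_odd i with hi | hi
  · simp [alternatingOrient, hi, Nat.even_add_one]
  · simp [alternatingOrient, Nat.not_even_iff_odd.2 hi, hi.add_one]

theorem Walk.IsHamiltonianCycle.exists_getVert_eq [DecidableEq V] {G : SimpleGraph V} {a : V}
    {p : G.Walk a a} (hp : p.IsHamiltonianCycle) (v : V) : ∃ i < p.length, p.getVert i = v := by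
  obtain ⟨i, rfl, hi⟩ := Walk.mem_support_iff_exists_getVert.1 (hp.mem_support v)
  rcases hi.lt_or_eq with hi | rfl
  · exact ⟨i, hi, rfl⟩
  · exact ⟨0, hp.isCycle.three_le_length.trans_lt' (by omega), by simp⟩

theorem Walk.IsCycle.exists_adj_notMem_edges [Fintype V] {G : SimpleGraph V} [DecidableRel G.Adj]
    {a : V} {p : G.Walk a a} (hp : p.IsCycle) (ha : 3 ≤ G.degree a) :
    ∃ w, G.Adj a w ∧ s(a, w) ∉ p.edges := by
  have hlt : (p.toSubgraph.neighborSet a).ncard < (G.neighborSet a).ncard := by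
    rw [hp.ncard_neighborSet_toSubgraph_eq_two p.start_mem_support, Set.ncard_eq_toFinset_card',
      ← neighborFinset_def, card_neighborFinset_eq_degree]
    omega
  obtain ⟨w, hw, hwp⟩ := Set.exists_mem_notMem_of_ncard_lt_ncard hlt
  exact ⟨w, hw, fun h => hwp (Walk.adj_toSubgraph_iff_mem_edges.2 h)⟩

variable [Fintype V] [DecidableEq V] {G : SimpleGraph V} [DecidableRel G.Adj]

def IsPairOrientedLabeling (orient : G.edgeSet → V × V)
    (label : G.edgeSet ≃ Fin G.edgeFinset.card) : Prop :=
  (∀ e : G.edgeSet, (e : Sym2 V) = s((orient e).1, (orient e).2)) ∧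
    ∀ v : V, ∃ e₁ e₂ : G.edgeSet, e₁ ≠ e₂ ∧ v ∈ (e₁ : Sym2 V) ∧ v ∈ (e₂ : Sym2 V) ∧
      (((orient e₁).1 = v ∧ (orient e₂).1 = v) ∨ ((orient e₁).2 = v ∧ (orient e₂).2 = v)) ∧
      ((label e₁ : ℕ) + 1 = (label e₂ : ℕ) ∨ (label e₂ : ℕ) + 1 = (label e₁ : ℕ))

theorem Walk.IsTrail.exists_isPairOrientedLabeling {u x : V} {p : G.Walk u x} (hp : p.IsTrail)
    (hcover : ∀ v, ∃ i, i + 1 < p.length ∧ p.getVert (i + 1) = v) :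
    ∃ orient label, IsPairOrientedLabeling (G := G) orient label := by
  obtain ⟨e, he⟩ := hp.edges_nodup.exists_equiv_fin_extend fun _ h => p.edges_subset_edgeSet h
  let label := e.trans (finCongr G.edgeFinset_card.symm)
  let step (i : ℕ) (hi : i < p.length) : G.edgeSet :=
    ⟨p.edges[i]'(p.length_edges ▸ hi), p.edges_subset_edgeSet (List.getElem_mem _)⟩
  have coe_step (i : ℕ) (hi : i < p.length) :
      (step i hi : Sym2 V) = s(p.getVert i, p.getVert (i + 1)) :=
    Walk.getElem_edges _
  have label_step (i : ℕ) (hi : i < p.length) : (label (step i hi) : ℕ) = i :=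
    he i _
  have eq_step (a : G.edgeSet) (ha : (label a : ℕ) < p.length) : a = step _ ha :=
    label.injective (Fin.ext (label_step _ ha).symm)
  let orient (a : G.edgeSet) : V × V :=
    if (label a : ℕ) < p.length then alternatingOrient p.getVert (label a)
    else (a : Sym2 V).out
  have orient_step (i : ℕ) (hi : i < p.length) :
      orient (step i hi) = alternatingOrient p.getVert i := by
    simp only [orient, label_step, hi, if_true]
  refine ⟨orient, label, fun a => ?_, fun v => ?_⟩
  · by_cases ha : (label a : ℕ) < p.length
    · obtain ⟨i, hi, rfl⟩ : ∃ i hi, a = step i hi := ⟨_, ha, eq_step a ha⟩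
      rw [orient_step i hi, mk_alternatingOrient, coe_step i hi]
    · simp only [orient, ha, if_false]
      exact (Quot.out_eq _).symm
  · obtain ⟨i, hi, rfl⟩ := hcover v
    have hi' : i < p.length := by omega
    refine ⟨step i hi', step (i + 1) hi, fun h => ?_, ?_, ?_, ?_, ?_⟩
    · simpa [label_step] using congrArg (fun a => (label a : ℕ)) h
    · exact coe_step i hi' ▸ Sym2.mem_mk_right _ _
    · exact coe_step (i + 1) hi ▸ Sym2.mem_mk_left _ _
    · rw [orient_step i hi', orient_step (i + 1) hi]
      exact alternatingOrient_agree_at_succ _ _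
    · simp [label_step]

end SimpleGraph

/-- Every Hamiltonian cubic graph admits a pair-oriented labeling: there are an
orientation of the edges and a bijective labeling of the edges by `1, …, m` (here modeled by
an equivalence with `Fin m`) such that every vertex has two incident edges that are both
oriented out of it or both into it and whose labels are consecutive. -/
theorem stmt_4 {V : Type*} [Fintype V] [DecidableEq V] (G : SimpleGraph V)
    [DecidableRel G.Adj]
    (hcubic : ∀ v : V, G.degree v = 3)
    (hham : G.IsHamiltonian) :
    ∃ (orient : G.edgeSet → V × V) (label : G.edgeSet ≃ Fin G.edgeFinset.card),
      (∀ e : G.edgeSet, (e : Sym2 V) = s((orient e).1, (orient e).2)) ∧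
      (∀ v : V, ∃ e₁ e₂ : G.edgeSet, e₁ ≠ e₂ ∧
        v ∈ (e₁ : Sym2 V) ∧ v ∈ (e₂ : Sym2 V) ∧
        (((orient e₁).1 = v ∧ (orient e₂).1 = v) ∨
          ((orient e₁).2 = v ∧ (orient e₂).2 = v)) ∧
        ((label e₁ : ℕ) + 1 = (label e₂ : ℕ) ∨ (label e₂ : ℕ) + 1 = (label e₁ : ℕ))) := by
  have hcard : Fintype.card V ≠ 1 := fun h => by
    obtain ⟨v, -⟩ := Fintype.card_eq_one_iff.1 h
    have := G.degree_lt_card_verts v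
    rw [hcubic] at this
    omega
  obtain ⟨a, p, hp⟩ := hham hcard
  obtain ⟨w, haw, hw⟩ := hp.isCycle.exists_adj_notMem_edges (hcubic a).ge
  refine (hp.isCycle.isTrail.cons haw.symm (Sym2.eq_swap ▸ hw)).exists_isPairOrientedLabeling
    fun v => ?_
  obtain ⟨i, hi, rfl⟩ := hp.exists_getVert_eq v
  exact ⟨i, by simpa using hi, SimpleGraph.Walk.getVert_cons_succ _ _⟩
end

section
/- Under the non-Helly triple setup (radii r_a, r_b, r_c ∈ [1, 1+ε] with 0 ≤ ε ≤ 0.0001, pairwise lens widths at least 0.265, and no common point), each of the three lens widths is less than 0.275: r_a + r_b − dist(a, b) < 0.275, r_b + r_c − dist(b, c) < 0.275, and r_c + r_a − dist(c, a) < 0.275. -/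
/-!
If one lens had width at least `0.275`, the three centres would have pairwise distances at most
`2 (1 + ε) - 0.275 ≤ 1.7252`, `1.7352` and `1.7352`. Such a triangle fits in a unit disk: if it
is obtuse or right, the midpoint of its longest side is within `1.7352 / 2` of all three
vertices; otherwise its circumradius `R` satisfies `R² · 16 Area² = a² b² c²`, and
`16 Area² ≥ a² b² c²` is a polynomial inequality in the squared side lengths that holds in the
given range. As all radii are at least `1`, the centre of that unit disk would be a common point
of the three disks.
-/

open scoped RealInnerProductSpace

/-- Sixteen times the squared area of a triangle with squared side lengths `A`, `B`, `D`. -/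
def heron (A B D : ℝ) : ℝ := 4 * A * B - (A + B - D) ^ 2

lemma heron_pos {A B D : ℝ} (h₁ : D < A + B) (h₂ : A < B + D) (h₃ : B < A + D) :
    0 < heron A B D := by
  unfold heron
  nlinarith [mul_pos (sub_pos.2 h₁) (sub_pos.2 h₂), mul_pos (sub_pos.2 h₁) (sub_pos.2 h₃),
    mul_pos (sub_pos.2 h₂) (sub_pos.2 h₃)]

lemma mul_mul_le_heron {A B D : ℝ}
    (hA : A ≤ 1.7252 ^ 2) (hB : B ≤ 1.7352 ^ 2) (hD : D ≤ 1.7352 ^ 2)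
    (h₁ : D ≤ A + B) (h₂ : A ≤ B + D) (h₃ : B ≤ A + D) :
    A * B * D ≤ heron A B D := by
  unfold heron
  nlinarith [mul_nonneg (sub_nonneg.2 h₁) (sub_nonneg.2 h₂),
    mul_nonneg (sub_nonneg.2 h₁) (sub_nonneg.2 h₃),
    mul_nonneg (sub_nonneg.2 h₂) (sub_nonneg.2 h₃),
    mul_nonneg (mul_nonneg (sub_nonneg.2 h₁) (sub_nonneg.2 h₂)) (sub_nonneg.2 h₃)]

lemma exists_circumcenter_coeffs {A B C : ℝ} (h : A * B - C ^ 2 ≠ 0) : ∃ p q : ℝ,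
    (p ^ 2 * A + 2 * (p * q) * C + q ^ 2 * B) * (4 * (A * B - C ^ 2)) = A * B * (A + B - 2 * C) ∧
    ((p - 1) ^ 2 * A + 2 * ((p - 1) * q) * C + q ^ 2 * B) * (4 * (A * B - C ^ 2)) =
      A * B * (A + B - 2 * C) ∧
    (p ^ 2 * A + 2 * (p * (q - 1)) * C + (q - 1) ^ 2 * B) * (4 * (A * B - C ^ 2)) =
      A * B * (A + B - 2 * C) := by
  have h' : B * A - C ^ 2 ≠ 0 := by rwa [mul_comm]
  refine ⟨B * (A - C) / (2 * (A * B - C ^ 2)), A * (B - C) / (2 * (A * B - C ^ 2)), ?_, ?_, ?_⟩ <;>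
  · field_simp
    ring

section InnerProductSpace

variable {F : Type*} [NormedAddCommGroup F] [InnerProductSpace ℝ F]

lemma norm_smul_add_smul_sq (u w : F) (p q : ℝ) :
    ‖p • u + q • w‖ ^ 2 = p ^ 2 * ‖u‖ ^ 2 + 2 * (p * q) * ⟪u, w⟫ + q ^ 2 * ‖w‖ ^ 2 := by
  rw [norm_add_sq_real, real_inner_smul_left, real_inner_smul_right, norm_smul, norm_smul]
  simp only [mul_pow, Real.norm_eq_abs, sq_abs]
  ring

lemma exists_norm_sq_mul_eq (u w : F) (h : ⟪u, w⟫ ^ 2 < ‖u‖ ^ 2 * ‖w‖ ^ 2) : ∃ v : F,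
    ‖v‖ ^ 2 * (4 * (‖u‖ ^ 2 * ‖w‖ ^ 2 - ⟪u, w⟫ ^ 2)) = ‖u‖ ^ 2 * ‖w‖ ^ 2 * ‖u - w‖ ^ 2 ∧
    ‖v - u‖ ^ 2 * (4 * (‖u‖ ^ 2 * ‖w‖ ^ 2 - ⟪u, w⟫ ^ 2)) = ‖u‖ ^ 2 * ‖w‖ ^ 2 * ‖u - w‖ ^ 2 ∧
    ‖v - w‖ ^ 2 * (4 * (‖u‖ ^ 2 * ‖w‖ ^ 2 - ⟪u, w⟫ ^ 2)) = ‖u‖ ^ 2 * ‖w‖ ^ 2 * ‖u - w‖ ^ 2 := by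
  obtain ⟨p, q, h₀, h₁, h₂⟩ := exists_circumcenter_coeffs (sub_pos.2 h).ne'
  refine ⟨p • u + q • w, ?_, ?_, ?_⟩
  · rw [norm_smul_add_smul_sq, h₀, norm_sub_sq_real]
    ring
  · rw [show p • u + q • w - u = (p - 1) • u + q • w by module, norm_smul_add_smul_sq, h₁,
      norm_sub_sq_real]
    ring
  · rw [show p • u + q • w - w = p • u + (q - 1) • w by module, norm_smul_add_smul_sq, h₂,
      norm_sub_sq_real]
    ring

lemma exists_circumcenter (a b c : F)
    (h : 0 < heron (dist a b ^ 2) (dist a c ^ 2) (dist b c ^ 2)) : ∃ x : F,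
    dist x a ^ 2 * heron (dist a b ^ 2) (dist a c ^ 2) (dist b c ^ 2) =
      dist a b ^ 2 * dist a c ^ 2 * dist b c ^ 2 ∧
    dist x b ^ 2 * heron (dist a b ^ 2) (dist a c ^ 2) (dist b c ^ 2) =
      dist a b ^ 2 * dist a c ^ 2 * dist b c ^ 2 ∧
    dist x c ^ 2 * heron (dist a b ^ 2) (dist a c ^ 2) (dist b c ^ 2) =
      dist a b ^ 2 * dist a c ^ 2 * dist b c ^ 2 := by
  have hab : dist a b = ‖b - a‖ := by rw [dist_comm, dist_eq_norm]
  have hac : dist a c = ‖c - a‖ := by rw [dist_comm, dist_eq_norm]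
  have hbc : dist b c = ‖(b - a) - (c - a)‖ := by rw [dist_eq_norm, sub_sub_sub_cancel_right]
  have hheron : heron (‖b - a‖ ^ 2) (‖c - a‖ ^ 2) (‖(b - a) - (c - a)‖ ^ 2) =
      4 * (‖b - a‖ ^ 2 * ‖c - a‖ ^ 2 - ⟪b - a, c - a⟫ ^ 2) := by
    rw [heron, norm_sub_sq_real (b - a) (c - a)]
    ring
  rw [hab, hac, hbc, hheron] at h ⊢
  obtain ⟨v, hva, hvb, hvc⟩ := exists_norm_sq_mul_eq (b - a) (c - a) (by linarith)
  refine ⟨a + v, ?_, ?_, ?_⟩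
  · rwa [dist_eq_norm, add_sub_cancel_left]
  · rwa [dist_eq_norm, show a + v - b = v - (b - a) by abel]
  · rwa [dist_eq_norm, show a + v - c = v - (c - a) by abel]

lemma exists_dist_le_of_sq_add_sq_le {r : ℝ} (a b c : F)
    (h : dist a b ^ 2 + dist a c ^ 2 ≤ dist b c ^ 2) (hr : dist b c ≤ 2 * r) :
    ∃ x : F, dist x a ≤ r ∧ dist x b ≤ r ∧ dist x c ≤ r := by
  have apollonius :=
    EuclideanGeometry.dist_sq_add_dist_sq_eq_two_mul_dist_midpoint_sq_add_half_dist_sq a b c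
  have hma : dist a (midpoint ℝ b c) ≤ dist b c / 2 :=
    (pow_le_pow_iff_left₀ dist_nonneg (by positivity) two_ne_zero).1 (by linarith)
  refine ⟨midpoint ℝ b c, ?_, ?_, ?_⟩
  · linarith [dist_comm (midpoint ℝ b c) a]
  · rw [dist_midpoint_left, Real.norm_two]; linarith
  · rw [dist_midpoint_right, Real.norm_two]; linarith

theorem exists_dist_le_one_of_dist_le (a b c : F) (hab : dist a b ≤ 1.7252)
    (hbc : dist b c ≤ 1.7352) (hca : dist c a ≤ 1.7352) :
    ∃ x : F, dist x a ≤ 1 ∧ dist x b ≤ 1 ∧ dist x c ≤ 1 := by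
  have hac : dist a c ≤ 1.7352 := by rwa [dist_comm]
  rcases le_or_gt (dist a b ^ 2 + dist a c ^ 2) (dist b c ^ 2) with hA | hA
  · exact exists_dist_le_of_sq_add_sq_le a b c hA (by linarith)
  rcases le_or_gt (dist b a ^ 2 + dist b c ^ 2) (dist a c ^ 2) with hB | hB
  · obtain ⟨x, hb, ha, hc⟩ := exists_dist_le_of_sq_add_sq_le (r := 1) b a c hB (by linarith)
    exact ⟨x, ha, hb, hc⟩
  rcases le_or_gt (dist c a ^ 2 + dist c b ^ 2) (dist a b ^ 2) with hC | hC
  · obtain ⟨x, hc, ha, hb⟩ := exists_dist_le_of_sq_add_sq_le (r := 1) c a b hC (by linarith)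
    exact ⟨x, ha, hb, hc⟩
  simp only [dist_comm b a, dist_comm c a, dist_comm c b] at hB hC
  have hpos := heron_pos hA hC hB
  have hle : dist a b ^ 2 * dist a c ^ 2 * dist b c ^ 2 ≤
      heron (dist a b ^ 2) (dist a c ^ 2) (dist b c ^ 2) :=
    mul_mul_le_heron (pow_le_pow_left₀ dist_nonneg hab 2) (pow_le_pow_left₀ dist_nonneg hac 2)
      (pow_le_pow_left₀ dist_nonneg hbc 2) hA.le hC.le hB.le
  have hunit : ∀ x y : F, dist x y ^ 2 * heron (dist a b ^ 2) (dist a c ^ 2) (dist b c ^ 2) =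
      dist a b ^ 2 * dist a c ^ 2 * dist b c ^ 2 → dist x y ≤ 1 := fun x y hxy =>
    (sq_le_one_iff₀ dist_nonneg).1 <| (mul_le_iff_le_one_left hpos).1 (hxy.trans_le hle)
  obtain ⟨x, ha, hb, hc⟩ := exists_circumcenter a b c hpos
  exact ⟨x, hunit x a ha, hunit x b hb, hunit x c hc⟩

end InnerProductSpace

theorem stmt_5_general (ε : ℝ) (hε1 : ε ≤ 0.0001)
    (a b c : EuclideanSpace ℝ (Fin 2)) (ra rb rc : ℝ)
    (hra1 : 1 ≤ ra) (hra2 : ra ≤ 1 + ε)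
    (hrb1 : 1 ≤ rb) (hrb2 : rb ≤ 1 + ε)
    (hrc1 : 1 ≤ rc) (hrc2 : rc ≤ 1 + ε)
    (hwab : 0.265 ≤ ra + rb - dist a b)
    (hwbc : 0.265 ≤ rb + rc - dist b c)
    (hwca : 0.265 ≤ rc + ra - dist c a)
    (hnonHelly : ¬ ∃ x : EuclideanSpace ℝ (Fin 2),
      dist x a ≤ ra ∧ dist x b ≤ rb ∧ dist x c ≤ rc) :
    ra + rb - dist a b < 0.275 ∧ rb + rc - dist b c < 0.275 ∧
    rc + ra - dist c a < 0.275 := by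
  have no_unit_cover : ∀ x, ¬(dist x a ≤ 1 ∧ dist x b ≤ 1 ∧ dist x c ≤ 1) :=
    fun x ⟨ha, hb, hc⟩ => hnonHelly ⟨x, ha.trans hra1, hb.trans hrb1, hc.trans hrc1⟩
  refine ⟨?_, ?_, ?_⟩ <;> by_contra! hw
  · obtain ⟨x, ha, hb, hc⟩ :=
      exists_dist_le_one_of_dist_le a b c (by linarith) (by linarith) (by linarith)
    exact no_unit_cover x ⟨ha, hb, hc⟩
  · obtain ⟨x, hb, hc, ha⟩ :=
      exists_dist_le_one_of_dist_le b c a (by linarith) (by linarith) (by linarith)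
    exact no_unit_cover x ⟨ha, hb, hc⟩
  · obtain ⟨x, hc, ha, hb⟩ :=
      exists_dist_le_one_of_dist_le c a b (by linarith) (by linarith) (by linarith)
    exact no_unit_cover x ⟨ha, hb, hc⟩

/-- Under the non-Helly triple setup, each of the three lens widths is
less than 0.275. -/
theorem stmt_5 (ε : ℝ) (hε0 : 0 ≤ ε) (hε1 : ε ≤ 0.0001)
    (a b c : EuclideanSpace ℝ (Fin 2)) (ra rb rc : ℝ)
    (hra1 : 1 ≤ ra) (hra2 : ra ≤ 1 + ε)
    (hrb1 : 1 ≤ rb) (hrb2 : rb ≤ 1 + ε)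
    (hrc1 : 1 ≤ rc) (hrc2 : rc ≤ 1 + ε)
    (hwab : 0.265 ≤ ra + rb - dist a b)
    (hwbc : 0.265 ≤ rb + rc - dist b c)
    (hwca : 0.265 ≤ rc + ra - dist c a)
    (hnonHelly : ¬ ∃ x : EuclideanSpace ℝ (Fin 2),
      dist x a ≤ ra ∧ dist x b ≤ rb ∧ dist x c ≤ rc) :
    ra + rb - dist a b < 0.275 ∧ rb + rc - dist b c < 0.275 ∧
    rc + ra - dist c a < 0.275 :=
  stmt_5_general ε hε1 a b c ra rb rc hra1 hra2 hrb1 hrb2 hrc1 hrc2 hwab hwbc hwca hnonHelly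
end

section
/- Under the non-Helly triple setup (radii r_a, r_b, r_c ∈ [1, 1+ε] with 0 ≤ ε ≤ 0.0001, pairwise lens widths at least 0.265, and no common point), every interior angle of the triangle abc lies in the interval [58.024°, 60.988°]: each of the angles ∠bac (at a), ∠abc (at b), and ∠bca (at c) is at least 58.024·π/180 and at most 60.988·π/180 radians. -/
/-!
Shrinking the radii to 1 keeps the triple non-Helly, and the lens widths bound every side by
`2 (1 + ε) - 0.265 ≤ 1.7352 < 2`. If a side `ab` has length at most `2` and the angle at `c` were
not acute, the midpoint of `ab` would lie in all three unit disks; so the triangle is acute.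
Its circumcenter is then equidistant from the vertices, so the circumradius `R` exceeds `1`,
and the law of sines `|ab| = 2 R sin C` gives `sin C < 1.7352 / 2`, i.e. `cos C > 0.497`,
which puts every angle below `60.988°`. The angle sum gives the lower bound `180° - 2 · 60.988°`.
-/

open EuclideanGeometry Real
open scoped RealInnerProductSpace

section InnerProductSpace

variable {V : Type*} [NormedAddCommGroup V] [InnerProductSpace ℝ V]

theorem inner_sub_pos_of_not_exists_dist_le {r : ℝ} {a b c : V} (hab : dist a b ≤ 2 * r)
    (h : ¬ ∃ x, dist x a ≤ r ∧ dist x b ≤ r ∧ dist x c ≤ r) : 0 < ⟪a - c, b - c⟫ := by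
  by_contra! hI
  have hsum : ‖(a - c) + (b - c)‖ ≤ dist a b := by
    rw [dist_eq_norm, show a - b = (a - c) - (b - c) by abel,
      ← sq_le_sq₀ (norm_nonneg _) (norm_nonneg _), norm_add_sq_real (a - c),
      norm_sub_sq_real (a - c)]
    linarith
  refine h ⟨midpoint ℝ a b, ?_, ?_, ?_⟩
  · rw [dist_midpoint_left, Real.norm_ofNat]; linarith
  · rw [dist_midpoint_right, Real.norm_ofNat]; linarith
  · rw [dist_eq_norm, midpoint_eq_smul_add, invOf_eq_inv,
      show (2⁻¹ : ℝ) • (a + b) - c = (2⁻¹ : ℝ) • ((a - c) + (b - c)) by module, norm_smul,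
      norm_inv, Real.norm_ofNat]
    linarith

theorem inner_sub_lt_norm_sq_of_not_exists_dist_le {r : ℝ} {a b c : V} (hbc : dist b c ≤ 2 * r)
    (h : ¬ ∃ x, dist x a ≤ r ∧ dist x b ≤ r ∧ dist x c ≤ r) :
    ⟪a - c, b - c⟫ < ‖a - c‖ ^ 2 := by
  have hIa := inner_sub_pos_of_not_exists_dist_le hbc fun ⟨x, ha, hb, hc⟩ => h ⟨x, hc, ha, hb⟩
  rw [show b - a = (b - c) - (a - c) by abel, show c - a = -(a - c) by abel, inner_sub_left,
    inner_neg_right, inner_neg_right, real_inner_self_eq_norm_sq, real_inner_comm] at hIa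
  linarith

theorem cos_angle_pos_of_not_exists_dist_le {r : ℝ} {a b c : V} (hab : dist a b ≤ 2 * r)
    (h : ¬ ∃ x, dist x a ≤ r ∧ dist x b ≤ r ∧ dist x c ≤ r) : 0 < cos (∠ a c b) := by
  have hI := inner_sub_pos_of_not_exists_dist_le hab h
  rw [EuclideanGeometry.angle, InnerProductGeometry.cos_angle, vsub_eq_sub, vsub_eq_sub]
  exact div_pos hI (hI.trans_le (real_inner_le_norm _ _))

theorem exists_circumcenter_of_inner_sq_lt {u v : V} (huv : ⟪u, v⟫ ^ 2 < ‖u‖ ^ 2 * ‖v‖ ^ 2) :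
    ∃ w : V, ‖w - u‖ = ‖w‖ ∧ ‖w - v‖ = ‖w‖ ∧
      ‖w‖ ^ 2 * (4 * (‖u‖ ^ 2 * ‖v‖ ^ 2 - ⟪u, v⟫ ^ 2)) = ‖u‖ ^ 2 * ‖v‖ ^ 2 * ‖u - v‖ ^ 2 := by
  obtain ⟨p, hp⟩ : ∃ p, ‖u‖ ^ 2 = p := ⟨_, rfl⟩
  obtain ⟨q, hq⟩ : ∃ q, ‖v‖ ^ 2 = q := ⟨_, rfl⟩
  obtain ⟨I, hI⟩ : ∃ I, ⟪u, v⟫ = I := ⟨_, rfl⟩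
  rw [hp, hq, hI] at huv ⊢
  obtain ⟨D, hDd⟩ : ∃ D, p * q - I ^ 2 = D := ⟨_, rfl⟩
  have hD : D ≠ 0 := by linarith
  have hinner : ∀ s t : ℝ,
      ⟪s • u + t • v, u⟫ = s * p + t * I ∧ ⟪s • u + t • v, v⟫ = s * I + t * q := by
    intro s t
    simp only [inner_add_left, real_inner_smul_left, real_inner_self_eq_norm_sq, hp, hq,
      real_inner_comm u v, hI, and_self]
  set A := q * (p - I) / (2 * D)
  set B := p * (q - I) / (2 * D)
  -- `A` and `B` solve the linear system `hwu`, `hwv` by Cramer's rule.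
  have hwu : ⟪A • u + B • v, u⟫ = p / 2 := by
    rw [(hinner A B).1]; simp only [A, B]; field_simp; rw [← hDd]; ring
  have hwv : ⟪A • u + B • v, v⟫ = q / 2 := by
    rw [(hinner A B).2]; simp only [A, B]; field_simp; rw [← hDd]; ring
  have hww : ‖A • u + B • v‖ ^ 2 = A * (p / 2) + B * (q / 2) := by
    rw [← hwu, ← hwv, ← real_inner_self_eq_norm_sq, inner_add_right, real_inner_smul_right,
      real_inner_smul_right]
  refine ⟨A • u + B • v, ?_, ?_, ?_⟩
  · rw [← sq_eq_sq₀ (norm_nonneg _) (norm_nonneg _), norm_sub_sq_real, hwu, hp]; ring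
  · rw [← sq_eq_sq₀ (norm_nonneg _) (norm_nonneg _), norm_sub_sq_real, hwv, hq]; ring
  · rw [hww, norm_sub_sq_real, hp, hq, hI]
    simp only [A, B]
    rw [hDd]
    field_simp
    ring

theorem four_mul_sq_mul_sub_inner_sq_lt {r : ℝ} {a b c : V} (hr : 0 ≤ r)
    (h : ¬ ∃ x, dist x a ≤ r ∧ dist x b ≤ r ∧ dist x c ≤ r)
    (hI : ⟪a - c, b - c⟫ ^ 2 < ‖a - c‖ ^ 2 * ‖b - c‖ ^ 2) :
    4 * r ^ 2 * (‖a - c‖ ^ 2 * ‖b - c‖ ^ 2 - ⟪a - c, b - c⟫ ^ 2)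
      < ‖a - c‖ ^ 2 * ‖b - c‖ ^ 2 * dist a b ^ 2 := by
  by_contra! hle
  obtain ⟨w, hwa, hwb, hw⟩ := exists_circumcenter_of_inner_sq_lt hI
  rw [dist_eq_norm, show a - b = (a - c) - (b - c) by abel] at hle
  have hwr : ‖w‖ ≤ r := by
    rw [← sq_le_sq₀ (norm_nonneg _) hr]
    refine le_of_mul_le_mul_right (a := 4 * (‖a - c‖ ^ 2 * ‖b - c‖ ^ 2 - ⟪a - c, b - c⟫ ^ 2))
      ?_ (by linarith)
    linarith
  refine h ⟨c + w, ?_, ?_, ?_⟩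
  · rwa [dist_eq_norm, show c + w - a = w - (a - c) by abel, hwa]
  · rwa [dist_eq_norm, show c + w - b = w - (b - c) by abel, hwb]
  · rwa [dist_eq_norm, add_sub_cancel_left]

theorem four_mul_sq_mul_sin_angle_sq_lt {r : ℝ} {a b c : V}
    (hab : dist a b ≤ 2 * r) (hbc : dist b c ≤ 2 * r) (hca : dist c a ≤ 2 * r)
    (h : ¬ ∃ x, dist x a ≤ r ∧ dist x b ≤ r ∧ dist x c ≤ r) :
    4 * r ^ 2 * sin (∠ a c b) ^ 2 < dist a b ^ 2 := by
  have hr : 0 ≤ r := by linarith [dist_nonneg (x := a) (y := b)]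
  have hI := inner_sub_pos_of_not_exists_dist_le hab h
  have hIa := inner_sub_lt_norm_sq_of_not_exists_dist_le hbc h
  have hIb := inner_sub_lt_norm_sq_of_not_exists_dist_le (a := b) (b := a) (dist_comm c a ▸ hca)
    fun ⟨x, hb, ha, hc⟩ => h ⟨x, ha, hb, hc⟩
  rw [real_inner_comm] at hIb
  have hpq : 0 < ‖a - c‖ ^ 2 * ‖b - c‖ ^ 2 := by nlinarith
  have hlt := four_mul_sq_mul_sub_inner_sq_lt hr h (by nlinarith)
  rw [← InnerProductGeometry.cos_angle_mul_norm_mul_norm] at hlt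
  refine lt_of_mul_lt_mul_left (a := ‖a - c‖ ^ 2 * ‖b - c‖ ^ 2) ?_ hpq.le
  rw [sin_sq]
  simp only [EuclideanGeometry.angle, vsub_eq_sub]
  linarith

theorem cos_60_988_deg_lt : cos (60.988 * π / 180) < 0.497 := by
  have hd : 60.988 * π / 180 = π / 3 + 0.988 * π / 180 := by ring
  have hsin : 0.988 / 90 ≤ sin (0.988 * π / 180) := by
    have := mul_le_sin (x := 0.988 * π / 180) (by positivity) (by nlinarith [pi_pos])
    rwa [show 2 / π * (0.988 * π / 180) = 0.988 / 90 by field_simp; ring] at this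
  have hsqrt : (1.7 : ℝ) ≤ √3 := by
    rw [show (1.7 : ℝ) = √(1.7 ^ 2) by rw [sqrt_sq (by norm_num)]]
    exact sqrt_le_sqrt (by norm_num)
  rw [hd, cos_add, cos_pi_div_three, sin_pi_div_three]
  nlinarith [cos_le_one (0.988 * π / 180)]

theorem angle_le_of_not_exists_dist_le_one {a b c : V}
    (hab : dist a b ≤ 1.7352) (hbc : dist b c ≤ 1.7352) (hca : dist c a ≤ 1.7352)
    (h : ¬ ∃ x, dist x a ≤ 1 ∧ dist x b ≤ 1 ∧ dist x c ≤ 1) :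
    ∠ a c b ≤ 60.988 * π / 180 := by
  have hcos := cos_angle_pos_of_not_exists_dist_le (r := 1) (by linarith) h
  have hsin := four_mul_sq_mul_sin_angle_sq_lt (by linarith) (by linarith) (by linarith) h
  -- `cos² C = 1 - sin² C > 1 - 1.7352² / 4 > 0.497²`
  have hcos' : 0.497 ≤ cos (∠ a c b) := by
    nlinarith [sin_sq_add_cos_sq (∠ a c b), dist_nonneg (x := a) (y := b)]
  by_contra! hlt
  have := cos_lt_cos_of_nonneg_of_le_pi (by positivity) (angle_le_pi a c b) hlt
  linarith [cos_60_988_deg_lt]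

end InnerProductSpace

theorem stmt_6_general (ε : ℝ) (hε1 : ε ≤ 0.0001)
    (a b c : EuclideanSpace ℝ (Fin 2)) (ra rb rc : ℝ)
    (hra1 : 1 ≤ ra) (hra2 : ra ≤ 1 + ε)
    (hrb1 : 1 ≤ rb) (hrb2 : rb ≤ 1 + ε)
    (hrc1 : 1 ≤ rc) (hrc2 : rc ≤ 1 + ε)
    (hwab : 0.265 ≤ ra + rb - dist a b)
    (hwbc : 0.265 ≤ rb + rc - dist b c)
    (hwca : 0.265 ≤ rc + ra - dist c a)
    (hnonHelly : ¬ ∃ x : EuclideanSpace ℝ (Fin 2),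
      dist x a ≤ ra ∧ dist x b ≤ rb ∧ dist x c ≤ rc) :
    (58.024 * Real.pi / 180 ≤ EuclideanGeometry.angle b a c ∧
      EuclideanGeometry.angle b a c ≤ 60.988 * Real.pi / 180) ∧
    (58.024 * Real.pi / 180 ≤ EuclideanGeometry.angle a b c ∧
      EuclideanGeometry.angle a b c ≤ 60.988 * Real.pi / 180) ∧
    (58.024 * Real.pi / 180 ≤ EuclideanGeometry.angle b c a ∧
      EuclideanGeometry.angle b c a ≤ 60.988 * Real.pi / 180) := by
  have h : ¬ ∃ x, dist x a ≤ 1 ∧ dist x b ≤ 1 ∧ dist x c ≤ 1 := fun ⟨x, ha, hb, hc⟩ =>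
    hnonHelly ⟨x, ha.trans hra1, hb.trans hrb1, hc.trans hrc1⟩
  have hab : dist a b ≤ 1.7352 := by linarith
  have hbc : dist b c ≤ 1.7352 := by linarith
  have hca : dist c a ≤ 1.7352 := by linarith
  have hA : ∠ b a c ≤ 60.988 * π / 180 := angle_le_of_not_exists_dist_le_one hbc hca hab
    fun ⟨x, ha, hb, hc⟩ => h ⟨x, hc, ha, hb⟩
  have hB : ∠ a b c ≤ 60.988 * π / 180 := angle_comm c b a ▸
    angle_le_of_not_exists_dist_le_one hca hab hbc fun ⟨x, hc, ha, hb⟩ => h ⟨x, ha, hb, hc⟩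
  have hC : ∠ b c a ≤ 60.988 * π / 180 := angle_comm a c b ▸
    angle_le_of_not_exists_dist_le_one hab hbc hca h
  have hIa := inner_sub_pos_of_not_exists_dist_le (r := 1) (by linarith)
    fun ⟨x, ha, hb, hc⟩ => h ⟨x, hc, ha, hb⟩
  have hba : b ≠ a := by
    rintro rfl
    simp at hIa
  have hsum := angle_add_angle_add_angle_eq_pi c hba
  rw [angle_comm c a b] at hsum
  refine ⟨⟨?_, hA⟩, ⟨?_, hB⟩, ⟨?_, hC⟩⟩ <;> linarith

/-- Under the non-Helly triple setup, every interior angle of the triangle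
`abc` lies in the interval [58.024°, 60.988°]. -/
theorem stmt_6 (ε : ℝ) (hε0 : 0 ≤ ε) (hε1 : ε ≤ 0.0001)
    (a b c : EuclideanSpace ℝ (Fin 2)) (ra rb rc : ℝ)
    (hra1 : 1 ≤ ra) (hra2 : ra ≤ 1 + ε)
    (hrb1 : 1 ≤ rb) (hrb2 : rb ≤ 1 + ε)
    (hrc1 : 1 ≤ rc) (hrc2 : rc ≤ 1 + ε)
    (hwab : 0.265 ≤ ra + rb - dist a b)
    (hwbc : 0.265 ≤ rb + rc - dist b c)
    (hwca : 0.265 ≤ rc + ra - dist c a)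
    (hnonHelly : ¬ ∃ x : EuclideanSpace ℝ (Fin 2),
      dist x a ≤ ra ∧ dist x b ≤ rb ∧ dist x c ≤ rc) :
    (58.024 * Real.pi / 180 ≤ EuclideanGeometry.angle b a c ∧
      EuclideanGeometry.angle b a c ≤ 60.988 * Real.pi / 180) ∧
    (58.024 * Real.pi / 180 ≤ EuclideanGeometry.angle a b c ∧
      EuclideanGeometry.angle a b c ≤ 60.988 * Real.pi / 180) ∧
    (58.024 * Real.pi / 180 ≤ EuclideanGeometry.angle b c a ∧
      EuclideanGeometry.angle b c a ≤ 60.988 * Real.pi / 180) :=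
  stmt_6_general ε hε1 a b c ra rb rc hra1 hra2 hrb1 hrb2 hrc1 hrc2 hwab hwbc hwca hnonHelly
end

section
/- Let a, b, c be points of the Euclidean plane with dist(a, b) ≤ 1.7252, dist(b, c) ≤ 1.7352, and dist(c, a) ≤ 1.7352. Then there exists a point x with dist(x, a) ≤ 1, dist(x, b) ≤ 1, and dist(x, c) ≤ 1. In particular, any three disks of radius at least 1 centered at a, b, c have a common point, so they do not form a non-Helly triple. -/
/-!
Let `m` be the midpoint of `ab` and `d = |cm|`. If `d ≤ 1`, then `m` itself works, since
`|ma| = |mb| = |ab|/2 ≤ 1`. Otherwise take the point `x` of the segment `cm` with `|xc| = 1`.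
Stewart's theorem for the cevian `ax` of the triangle `acm` gives
`d · |ax|² = (d - 1)|ac|² + |am|² - d(d - 1)`, so `|ax| ≤ 1` as soon as
`(d - 1) L² + s² ≤ d²`, where `L` bounds `|ca|, |cb|` and `s` bounds `|ab|/2`. This quadratic
inequality in `d` holds for all `d` when its discriminant `L⁴ - 4(L² - s²)` is nonpositive,
which is the case for `L = 1.7352`, `s = 0.8626`.
-/

open EuclideanGeometry AffineMap

lemma sub_one_mul_sq_add_sq_le_sq {d ℓ r s L : ℝ} (hL : L ^ 4 ≤ 4 * (L ^ 2 - s ^ 2))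
    (hd : 1 ≤ d) (hℓ : 0 ≤ ℓ) (hℓL : ℓ ≤ L) (hr : 0 ≤ r) (hrs : r ≤ s) :
    (d - 1) * ℓ ^ 2 + r ^ 2 ≤ d ^ 2 := by
  have hℓ2 : ℓ ^ 2 ≤ L ^ 2 := pow_le_pow_left₀ hℓ hℓL 2
  have hr2 : r ^ 2 ≤ s ^ 2 := pow_le_pow_left₀ hr hrs 2
  nlinarith [sq_nonneg (d - L ^ 2 / 2)]

lemma dist_lineMap_inv_dist_le_one {V P : Type*} [NormedAddCommGroup V] [InnerProductSpace ℝ V]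
    [MetricSpace P] [NormedAddTorsor V P] {a c m : P} (hcm : 1 < dist c m)
    (h : (dist c m - 1) * dist a c ^ 2 + dist a m ^ 2 ≤ dist c m ^ 2) :
    dist a (lineMap c m (dist c m)⁻¹) ≤ 1 := by
  set d := dist c m
  set x := lineMap c m d⁻¹
  have hd : 0 < d := one_pos.trans hcm
  have hxc : dist c x = 1 := by
    rw [dist_comm, dist_lineMap_left, Real.norm_of_nonneg (inv_nonneg.2 hd.le),
      inv_mul_cancel₀ hd.ne']
  have hxm : dist m x = d - 1 := by
    rw [dist_comm, dist_lineMap_right, Real.norm_of_nonneg (by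
      linarith [inv_le_one_of_one_le₀ hcm.le]), sub_mul, one_mul, inv_mul_cancel₀ hd.ne']
  have hsbtw : Sbtw ℝ c x m :=
    sbtw_lineMap_iff.2 ⟨dist_pos.1 hd, inv_pos.2 hd, inv_lt_one_of_one_lt₀ hcm⟩
  have stewart := dist_sq_mul_dist_add_dist_sq_mul_dist a c m x hsbtw.angle₁₂₃_eq_pi
  rw [hxc, hxm] at stewart
  have hsq : d * dist a x ^ 2 ≤ d * 1 ^ 2 := by linarith
  exact (pow_le_pow_iff_left₀ dist_nonneg zero_le_one two_ne_zero).1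
    (le_of_mul_le_mul_left hsq hd)

theorem exists_dist_le_one_of_dist_le_s7 {V P : Type*} [NormedAddCommGroup V]
    [InnerProductSpace ℝ V] [MetricSpace P] [NormedAddTorsor V P] {a b c : P} {s L : ℝ}
    (hL : L ^ 4 ≤ 4 * (L ^ 2 - s ^ 2)) (hab : dist a b ≤ 2 * s) (hca : dist c a ≤ L)
    (hcb : dist c b ≤ L) :
    ∃ x, dist x a ≤ 1 ∧ dist x b ≤ 1 ∧ dist x c ≤ 1 := by
  set m := midpoint ℝ a b
  have hma : dist a m = dist a b / 2 := by
    rw [dist_left_midpoint, Real.norm_two, inv_mul_eq_div]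
  have hmb : dist b m = dist a b / 2 := by
    rw [dist_right_midpoint, Real.norm_two, inv_mul_eq_div]
  have hhalf : dist a b / 2 ≤ s := by linarith
  rcases le_or_gt (dist c m) 1 with hcm | hcm
  · -- `hL` says `4 s² ≤ 4 - (L² - 2)²`.
    have hhalf_le_one : dist a b / 2 ≤ 1 := by
      nlinarith [sq_nonneg (L ^ 2 - 2), dist_nonneg (x := a) (y := b)]
    refine ⟨m, ?_, ?_, ?_⟩
    · rwa [dist_comm, hma]
    · rwa [dist_comm, hmb]
    · rwa [dist_comm]
  · have hquad {p : P} (hcp : dist c p ≤ L) (hpm : dist p m = dist a b / 2) :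
        (dist c m - 1) * dist p c ^ 2 + dist p m ^ 2 ≤ dist c m ^ 2 := by
      rw [dist_comm p c, hpm]
      exact sub_one_mul_sq_add_sq_le_sq hL hcm.le dist_nonneg hcp (by positivity) hhalf
    refine ⟨lineMap c m (dist c m)⁻¹, ?_, ?_, ?_⟩
    · rw [dist_comm]; exact dist_lineMap_inv_dist_le_one hcm (hquad hca hma)
    · rw [dist_comm]; exact dist_lineMap_inv_dist_le_one hcm (hquad hcb hmb)
    · rw [dist_lineMap_left, Real.norm_of_nonneg (inv_nonneg.2 (by positivity)),
        inv_mul_cancel₀ (by positivity)]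

/-- Three points of the plane with pairwise distances at most 1.7252, 1.7352,
1.7352 admit a common point within distance 1 of each of them; in particular any three disks
of radii at least 1 centered at them have a common point. -/
theorem stmt_7 (a b c : EuclideanSpace ℝ (Fin 2))
    (hab : dist a b ≤ 1.7252) (hbc : dist b c ≤ 1.7352) (hca : dist c a ≤ 1.7352) :
    (∃ x : EuclideanSpace ℝ (Fin 2), dist x a ≤ 1 ∧ dist x b ≤ 1 ∧ dist x c ≤ 1) ∧
    (∀ ra rb rc : ℝ, 1 ≤ ra → 1 ≤ rb → 1 ≤ rc →
      ∃ x : EuclideanSpace ℝ (Fin 2), dist x a ≤ ra ∧ dist x b ≤ rb ∧ dist x c ≤ rc) := by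
  obtain ⟨x, hxa, hxb, hxc⟩ := exists_dist_le_one_of_dist_le_s7 (a := a) (b := b) (c := c)
    (s := 0.8626) (L := 1.7352) (by norm_num) (by linarith) hca (by rwa [dist_comm])
  exact ⟨⟨x, hxa, hxb, hxc⟩, fun ra rb rc hra hrb hrc =>
    ⟨x, hxa.trans hra, hxb.trans hrb, hxc.trans hrc⟩⟩
end

section
/- Under the non-Helly triple setup (radii r_a, r_b, r_c ∈ [1, 1+ε] with 0 ≤ ε ≤ 0.0001, pairwise lens widths at least 0.265, and no common point), for each of the three lens midpoints the distances to the centers of its two defining disks lie in the interval [0.8625, 0.8675 + ε]: in particular 0.8625 ≤ dist(a, w_ab) ≤ 0.8675 + ε and 0.8625 ≤ dist(b, w_ab) ≤ 0.8675 + ε, and similarly for w_bc (with centers b, c) and w_ca (with centers c, a). -/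
/-!
The distance from `a` to the lens midpoint `w_ab` is `(dist a b + r_a - r_b) / 2`, so the upper
bound is just the width condition. The lower bound needs `dist a b > 1.7251`, and this is where
the non-Helly hypothesis enters: the width condition makes all three center distances at most
`1.7352`, and if one of them were at most `1.7251`, the three unit disks would already share a
point. Indeed, for an obtuse or right triangle the midpoint of the longest side is such a point,
and for an acute one the circumcenter is, because the triangle is then close enough to the
equilateral triangle of side `√3`, whose circumradius is exactly `1`.
-/

open EuclideanGeometry

/-- Sixteen times the squared area of a triangle with squared side lengths `x`, `y`, `z`. -/
def heronForm (x y z : ℝ) : ℝ := 2 * (x * y + y * z + z * x) - x ^ 2 - y ^ 2 - z ^ 2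

/- Substituting `p = y + z - x`, `q = z + x - y`, `r = x + y - z` for squared side lengths, this
says that the circumradius is at most `1`; equality holds at `p = q = r = 3`. -/
lemma add_mul_add_mul_add_le_eight_mul (p q r : ℝ) (hp : 0 ≤ p) (hq : 0 ≤ q) (hr : 0 ≤ r)
    (hqr : q + r ≤ 2 * 1.7251 ^ 2) (hrp : r + p ≤ 2 * 1.7352 ^ 2)
    (hpq : p + q ≤ 2 * 1.7352 ^ 2) :
    (p + q) * (q + r) * (r + p) ≤ 8 * (p * q + q * r + r * p) := by
  have hexpand : (p + q) * (q + r) * (r + p) =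
      (p + q + r) * (p * q + q * r + r * p) - p * q * r := by
    ring
  rcases le_total (p + q + r) 8 with hs | hs
  · rw [hexpand]
    nlinarith [mul_nonneg (mul_nonneg hp hq) hr, mul_le_mul_of_nonneg_right hs
      (by positivity : 0 ≤ p * q + q * r + r * p)]
  · have hp2 : 8 - 2 * 1.7251 ^ 2 ≤ p := by linarith
    have hq2 : 8 - 2 * 1.7352 ^ 2 ≤ q := by linarith
    have hr2 : 8 - 2 * 1.7352 ^ 2 ≤ r := by linarith
    nlinarith [mul_nonneg (sub_nonneg.2 hp2) (sub_nonneg.2 hq2),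
      mul_nonneg (sub_nonneg.2 hq2) (sub_nonneg.2 hr2),
      mul_nonneg (sub_nonneg.2 hp2) (sub_nonneg.2 hr2),
      mul_nonneg (mul_nonneg (sub_nonneg.2 hp2) (sub_nonneg.2 hq2)) (sub_nonneg.2 hr2),
      sq_nonneg (p - q), sq_nonneg (q - r), sq_nonneg (p - r)]

noncomputable def circumradiusSq (x y z : ℝ) : ℝ := x * y * z / heronForm x y z

lemma circumradiusSq_le_one {x y z : ℝ} (hx : x ≤ 1.7251 ^ 2) (hy : y ≤ 1.7352 ^ 2)
    (hz : z ≤ 1.7352 ^ 2) (hxa : x < y + z) (hya : y < z + x) (hza : z < x + y) :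
    0 < heronForm x y z ∧ circumradiusSq x y z ≤ 1 := by
  have hheron : heronForm x y z = (y + z - x) * (z + x - y) + (z + x - y) * (x + y - z) +
      (x + y - z) * (y + z - x) := by
    unfold heronForm; ring
  have hS : 0 < heronForm x y z := by
    rw [hheron]
    nlinarith [mul_pos (sub_pos.2 hxa) (sub_pos.2 hya), mul_pos (sub_pos.2 hya) (sub_pos.2 hza),
      mul_pos (sub_pos.2 hza) (sub_pos.2 hxa)]
  refine ⟨hS, ?_⟩
  have hcore := add_mul_add_mul_add_le_eight_mul (y + z - x) (z + x - y) (x + y - z)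
    (by linarith) (by linarith) (by linarith) (by linarith) (by linarith) (by linarith)
  rw [circumradiusSq, div_le_one hS, hheron]
  linarith

section InnerProductSpace

variable {V : Type*} [NormedAddCommGroup V] [InnerProductSpace ℝ V]

lemma norm_smul_add_smul_sq_s9 (u v : V) (s t : ℝ) :
    ‖s • u + t • v‖ ^ 2 =
      s ^ 2 * ‖u‖ ^ 2 + s * t * (‖u‖ ^ 2 + ‖v‖ ^ 2 - ‖u - v‖ ^ 2) + t ^ 2 * ‖v‖ ^ 2 := by
  rw [norm_add_sq_real, norm_sub_sq_real, real_inner_smul_left, real_inner_smul_right,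
    norm_smul, norm_smul, Real.norm_eq_abs, Real.norm_eq_abs, mul_pow, mul_pow, sq_abs, sq_abs]
  ring

lemma exists_dist_sq_eq_circumradiusSq (a b c : V)
    (hS : 0 < heronForm (dist a b ^ 2) (dist b c ^ 2) (dist c a ^ 2)) :
    ∃ o : V, dist a o ^ 2 = circumradiusSq (dist a b ^ 2) (dist b c ^ 2) (dist c a ^ 2) ∧
      dist b o ^ 2 = circumradiusSq (dist a b ^ 2) (dist b c ^ 2) (dist c a ^ 2) ∧
      dist c o ^ 2 = circumradiusSq (dist a b ^ 2) (dist b c ^ 2) (dist c a ^ 2) := by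
  set x := dist a b ^ 2
  set y := dist b c ^ 2
  set z := dist c a ^ 2
  set S := heronForm x y z with hSdef
  have hquad : ∀ s t : ℝ,
      ‖s • (b - a) + t • (c - a)‖ ^ 2 = s ^ 2 * x + s * t * (x + z - y) + t ^ 2 * z := by
    intro s t
    rw [norm_smul_add_smul_sq_s9, sub_sub_sub_cancel_right, ← dist_eq_norm, ← dist_eq_norm,
      ← dist_eq_norm, dist_comm b a]
  -- the barycentric weights of the circumcenter at `a`, `b`, `c` are
  -- `y (z + x - y) / S`, `z (x + y - z) / S`, `x (y + z - x) / S`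
  set s := z * (x + y - z) / S
  set t := x * (y + z - x) / S
  refine ⟨a + (s • (b - a) + t • (c - a)), ?_, ?_, ?_⟩
  · rw [dist_comm, dist_eq_norm, add_sub_cancel_left, hquad]
    simp only [s, t, circumradiusSq, ← hSdef]
    field_simp
    simp only [S, heronForm]
    ring
  · have : a + (s • (b - a) + t • (c - a)) - b = (s - 1) • (b - a) + t • (c - a) := by
      rw [sub_smul, one_smul]; abel
    rw [dist_comm, dist_eq_norm, this, hquad]
    simp only [s, t, circumradiusSq, ← hSdef]
    field_simp
    simp only [S, heronForm]
    ring
  · have : a + (s • (b - a) + t • (c - a)) - c = s • (b - a) + (t - 1) • (c - a) := by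
      rw [sub_smul, one_smul]; abel
    rw [dist_comm, dist_eq_norm, this, hquad]
    simp only [s, t, circumradiusSq, ← hSdef]
    field_simp
    simp only [S, heronForm]
    ring

lemma exists_forall_dist_le_of_sq_add_sq_le (a b c : V) {r : ℝ} (hab : dist a b ≤ 2 * r)
    (hc : dist c a ^ 2 + dist c b ^ 2 ≤ dist a b ^ 2) :
    ∃ x : V, dist x a ≤ r ∧ dist x b ≤ r ∧ dist x c ≤ r := by
  have hapollonius := dist_sq_add_dist_sq_eq_two_mul_dist_midpoint_sq_add_half_dist_sq c a b
  have hmid : dist c (midpoint ℝ a b) ≤ dist a b / 2 := by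
    nlinarith [dist_nonneg (x := c) (y := midpoint ℝ a b), dist_nonneg (x := a) (y := b)]
  refine ⟨midpoint ℝ a b, ?_, ?_, by rw [dist_comm]; linarith⟩
  · rw [dist_midpoint_left, Real.norm_two]; linarith
  · rw [dist_midpoint_right, Real.norm_two]; linarith

lemma exists_forall_dist_le_one (a b c : V) (hab : dist a b ≤ 1.7251) (hbc : dist b c ≤ 1.7352)
    (hca : dist c a ≤ 1.7352) : ∃ x : V, dist x a ≤ 1 ∧ dist x b ≤ 1 ∧ dist x c ≤ 1 := by
  by_cases hc : dist c a ^ 2 + dist c b ^ 2 ≤ dist a b ^ 2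
  · exact exists_forall_dist_le_of_sq_add_sq_le a b c (by linarith) hc
  by_cases ha : dist a b ^ 2 + dist a c ^ 2 ≤ dist b c ^ 2
  · obtain ⟨x, hxb, hxc, hxa⟩ :=
      exists_forall_dist_le_of_sq_add_sq_le b c a (r := 1) (by linarith) ha
    exact ⟨x, hxa, hxb, hxc⟩
  by_cases hb : dist b c ^ 2 + dist b a ^ 2 ≤ dist c a ^ 2
  · obtain ⟨x, hxc, hxa, hxb⟩ :=
      exists_forall_dist_le_of_sq_add_sq_le c a b (r := 1) (by linarith) hb
    exact ⟨x, hxa, hxb, hxc⟩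
  rw [dist_comm c b] at hc
  rw [dist_comm a c] at ha
  rw [dist_comm b a] at hb
  have hab2 : dist a b ^ 2 ≤ 1.7251 ^ 2 := pow_le_pow_left₀ dist_nonneg hab 2
  have hbc2 : dist b c ^ 2 ≤ 1.7352 ^ 2 := pow_le_pow_left₀ dist_nonneg hbc 2
  have hca2 : dist c a ^ 2 ≤ 1.7352 ^ 2 := pow_le_pow_left₀ dist_nonneg hca 2
  obtain ⟨hS, hR⟩ :=
    circumradiusSq_le_one hab2 hbc2 hca2 (by linarith) (by linarith) (by linarith)
  obtain ⟨o, hao, hbo, hco⟩ := exists_dist_sq_eq_circumradiusSq a b c hS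
  refine ⟨o, ?_, ?_, ?_⟩ <;> rw [dist_comm, ← sq_le_one_iff₀ dist_nonneg]
  exacts [hao ▸ hR, hbo ▸ hR, hco ▸ hR]

lemma lt_dist_of_not_exists_forall_dist_le_one (a b c : V) (hab : dist a b ≤ 1.7352)
    (hbc : dist b c ≤ 1.7352) (hca : dist c a ≤ 1.7352)
    (h : ¬∃ x : V, dist x a ≤ 1 ∧ dist x b ≤ 1 ∧ dist x c ≤ 1) :
    1.7251 < dist a b ∧ 1.7251 < dist b c ∧ 1.7251 < dist c a := by
  refine ⟨lt_of_not_ge fun hab' => h (exists_forall_dist_le_one a b c hab' hbc hca),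
    lt_of_not_ge fun hbc' => h ?_, lt_of_not_ge fun hca' => h ?_⟩
  · obtain ⟨x, hxb, hxc, hxa⟩ := exists_forall_dist_le_one b c a hbc' hca hab
    exact ⟨x, hxa, hxb, hxc⟩
  · obtain ⟨x, hxc, hxa, hxb⟩ := exists_forall_dist_le_one c a b hca' hab hbc
    exact ⟨x, hxa, hxb, hxc⟩

lemma dist_lens_midpoint (p q : V) (rp rq : ℝ) (hpq : 0 < dist p q)
    (h : |rp - rq| ≤ dist p q) :
    dist p (p + ((dist p q + rp - rq) / (2 * dist p q)) • (q - p)) = (dist p q + rp - rq) / 2 ∧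
      dist q (p + ((dist p q + rp - rq) / (2 * dist p q)) • (q - p)) =
        (dist p q + rq - rp) / 2 := by
  obtain ⟨h₁, h₂⟩ := abs_le.1 h
  rw [add_comm p, ← AffineMap.lineMap_apply_module', dist_comm p, dist_comm q,
    dist_lineMap_left, dist_lineMap_right, Real.norm_eq_abs, Real.norm_eq_abs,
    abs_of_nonneg (div_nonneg (by linarith) (by positivity)), abs_of_nonneg]
  · exact ⟨by field_simp, by field_simp; ring⟩
  · rw [sub_nonneg, div_le_one (by positivity)]
    linarith

end InnerProductSpace

theorem stmt_9_general (ε : ℝ) (hε1 : ε ≤ 0.0001)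
    (a b c : EuclideanSpace ℝ (Fin 2)) (ra rb rc : ℝ)
    (hra1 : 1 ≤ ra) (hra2 : ra ≤ 1 + ε)
    (hrb1 : 1 ≤ rb) (hrb2 : rb ≤ 1 + ε)
    (hrc1 : 1 ≤ rc) (hrc2 : rc ≤ 1 + ε)
    (hwab : 0.265 ≤ ra + rb - dist a b)
    (hwbc : 0.265 ≤ rb + rc - dist b c)
    (hwca : 0.265 ≤ rc + ra - dist c a)
    (hnonHelly : ¬ ∃ x : EuclideanSpace ℝ (Fin 2),
      dist x a ≤ ra ∧ dist x b ≤ rb ∧ dist x c ≤ rc)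
    (wab wbc wca : EuclideanSpace ℝ (Fin 2))
    (hwabdef : wab = a + ((dist a b + ra - rb) / (2 * dist a b)) • (b - a))
    (hwbcdef : wbc = b + ((dist b c + rb - rc) / (2 * dist b c)) • (c - b))
    (hwcadef : wca = c + ((dist c a + rc - ra) / (2 * dist c a)) • (a - c)) :
    (0.8625 ≤ dist a wab ∧ dist a wab ≤ 0.8675 + ε) ∧
    (0.8625 ≤ dist b wab ∧ dist b wab ≤ 0.8675 + ε) ∧
    (0.8625 ≤ dist b wbc ∧ dist b wbc ≤ 0.8675 + ε) ∧
    (0.8625 ≤ dist c wbc ∧ dist c wbc ≤ 0.8675 + ε) ∧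
    (0.8625 ≤ dist c wca ∧ dist c wca ≤ 0.8675 + ε) ∧
    (0.8625 ≤ dist a wca ∧ dist a wca ≤ 0.8675 + ε) := by
  obtain ⟨hab, hbc, hca⟩ := lt_dist_of_not_exists_forall_dist_le_one a b c
    (by linarith) (by linarith) (by linarith)
    fun ⟨x, hxa, hxb, hxc⟩ => hnonHelly ⟨x, hxa.trans hra1, hxb.trans hrb1, hxc.trans hrc1⟩
  obtain ⟨hawab, hbwab⟩ :=
    dist_lens_midpoint a b ra rb (by linarith) (abs_le.2 ⟨by linarith, by linarith⟩)
  obtain ⟨hbwbc, hcwbc⟩ :=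
    dist_lens_midpoint b c rb rc (by linarith) (abs_le.2 ⟨by linarith, by linarith⟩)
  obtain ⟨hcwca, hawca⟩ :=
    dist_lens_midpoint c a rc ra (by linarith) (abs_le.2 ⟨by linarith, by linarith⟩)
  subst hwabdef hwbcdef hwcadef
  rw [hawab, hbwab, hbwbc, hcwbc, hcwca, hawca]
  refine ⟨⟨?_, ?_⟩, ⟨?_, ?_⟩, ⟨?_, ?_⟩, ⟨?_, ?_⟩, ⟨?_, ?_⟩, ⟨?_, ?_⟩⟩ <;> linarith

/-- Under the non-Helly triple setup, each lens midpoint has distance in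
[0.8625, 0.8675 + ε] to the centers of its two defining disks. -/
theorem stmt_9 (ε : ℝ) (hε0 : 0 ≤ ε) (hε1 : ε ≤ 0.0001)
    (a b c : EuclideanSpace ℝ (Fin 2)) (ra rb rc : ℝ)
    (hra1 : 1 ≤ ra) (hra2 : ra ≤ 1 + ε)
    (hrb1 : 1 ≤ rb) (hrb2 : rb ≤ 1 + ε)
    (hrc1 : 1 ≤ rc) (hrc2 : rc ≤ 1 + ε)
    (hwab : 0.265 ≤ ra + rb - dist a b)
    (hwbc : 0.265 ≤ rb + rc - dist b c)
    (hwca : 0.265 ≤ rc + ra - dist c a)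
    (hnonHelly : ¬ ∃ x : EuclideanSpace ℝ (Fin 2),
      dist x a ≤ ra ∧ dist x b ≤ rb ∧ dist x c ≤ rc)
    (wab wbc wca : EuclideanSpace ℝ (Fin 2))
    (hwabdef : wab = a + ((dist a b + ra - rb) / (2 * dist a b)) • (b - a))
    (hwbcdef : wbc = b + ((dist b c + rb - rc) / (2 * dist b c)) • (c - b))
    (hwcadef : wca = c + ((dist c a + rc - ra) / (2 * dist c a)) • (a - c)) :
    (0.8625 ≤ dist a wab ∧ dist a wab ≤ 0.8675 + ε) ∧
    (0.8625 ≤ dist b wab ∧ dist b wab ≤ 0.8675 + ε) ∧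
    (0.8625 ≤ dist b wbc ∧ dist b wbc ≤ 0.8675 + ε) ∧
    (0.8625 ≤ dist c wbc ∧ dist c wbc ≤ 0.8675 + ε) ∧
    (0.8625 ≤ dist c wca ∧ dist c wca ≤ 0.8675 + ε) ∧
    (0.8625 ≤ dist a wca ∧ dist a wca ≤ 0.8675 + ε) :=
  stmt_9_general ε hε1 a b c ra rb rc hra1 hra2 hrb1 hrb2 hrc1 hrc2 hwab hwbc hwca hnonHelly wab wbc
    wca hwabdef hwbcdef hwcadef
end

section
/- Let p', c, w be points of the Euclidean plane with 0.8625 ≤ dist(c, w) ≤ 0.8676, 1 ≤ dist(p', w) ≤ 1.0001, and suppose the angle ∠(p', c, w) at the vertex c is at most 17.5·π/180 radians. Then dist(p', c) ≥ 1.78. -/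
/-!
By the law of cosines, `dist p' w ^ 2 = x ^ 2 + a ^ 2 - 2 a x cos θ` with `x = dist p' c`,
`a = dist c w`, and `cos θ ≥ cos 17.5° > 0.95`. Hence `1 ≤ x ^ 2 - 1.9 a x + a ^ 2`. For `a` in the
given range this convex quadratic in `x` is below `1` at both `x = 0` and `x = 1.78`, so `x ≥ 1.78`.
-/

open Real EuclideanGeometry

lemma one_sub_sq_div_two_le_cos_of_le {θ t : ℝ} (hθ : 0 ≤ θ) (hθt : θ ≤ t) (ht : t ≤ π) :
    1 - t ^ 2 / 2 ≤ cos θ :=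
  (one_sub_sq_div_two_le_cos).trans (cos_le_cos_of_nonneg_of_le_pi hθ ht hθt)

lemma le_cos_of_le_seventeen_point_five_deg {θ : ℝ} (hθ : 0 ≤ θ) (hθt : θ ≤ 17.5 * π / 180) :
    0.95 ≤ cos θ := by
  have hπ : π ≤ 3.1416 := pi_lt_d4.le
  refine le_trans ?_ (one_sub_sq_div_two_le_cos_of_le hθ hθt (by linarith [pi_pos]))
  nlinarith [pi_pos]

lemma EuclideanGeometry.dist_mul_self_le_of_le_cos_angle {V P : Type*} [NormedAddCommGroup V]
    [InnerProductSpace ℝ V] [MetricSpace P] [NormedAddTorsor V P] {p₁ p₂ p₃ : P} {k : ℝ}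
    (hk : k ≤ cos (∠ p₁ p₂ p₃)) :
    dist p₁ p₃ * dist p₁ p₃ ≤
      dist p₁ p₂ * dist p₁ p₂ + dist p₂ p₃ * dist p₂ p₃ - 2 * k * dist p₁ p₂ * dist p₂ p₃ := by
  have hlaw := dist_sq_eq_dist_sq_add_dist_sq_sub_two_mul_dist_mul_dist_mul_cos_angle p₁ p₂ p₃
  rw [dist_comm p₃ p₂] at hlaw
  rw [hlaw]
  have := mul_nonneg (dist_nonneg (x := p₁) (y := p₂)) (dist_nonneg (x := p₂) (y := p₃))
  nlinarith

/-- With `f x = x ^ 2 - 1.9 a x + a ^ 2 - 1` one has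
`f x = (1 - x / 1.78) f 0 + (x / 1.78) f 1.78 + x (x - 1.78)`, where `f 0 < 0` as `a < 1` and
`f 1.78 < 0` as `a > 0.8598`. -/
lemma le_of_one_le_sq_sub_mul_add_sq {x a : ℝ} (hx : 0 ≤ x) (ha₁ : 0.8625 ≤ a) (ha₂ : a ≤ 0.8676)
    (h : 1 ≤ x * x + a * a - 1.9 * x * a) : 1.78 ≤ x := by
  by_contra! hlt
  nlinarith [mul_nonneg hx (sub_nonneg.2 hlt.le), mul_nonneg (sub_nonneg.2 ha₁) (sub_nonneg.2 hlt.le),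
    mul_nonneg (sub_nonneg.2 ha₂) hx]

theorem stmt_12_general (p' c w : EuclideanSpace ℝ (Fin 2))
    (hcw1 : 0.8625 ≤ dist c w) (hcw2 : dist c w ≤ 0.8676)
    (hpw1 : 1 ≤ dist p' w)
    (hang : EuclideanGeometry.angle p' c w ≤ 17.5 * Real.pi / 180) :
    1.78 ≤ dist p' c := by
  have hcos : 0.95 ≤ cos (∠ p' c w) := le_cos_of_le_seventeen_point_five_deg (angle_nonneg _ _ _) hang
  have hlaw := dist_mul_self_le_of_le_cos_angle hcos
  refine le_of_one_le_sq_sub_mul_add_sq dist_nonneg hcw1 hcw2 ?_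
  nlinarith

/-- If `0.8625 ≤ dist c w ≤ 0.8676`, `1 ≤ dist p' w ≤ 1.0001`, and the angle
`∠(p', c, w)` at `c` is at most 17.5°, then `dist p' c ≥ 1.78`. -/
theorem stmt_12 (p' c w : EuclideanSpace ℝ (Fin 2))
    (hcw1 : 0.8625 ≤ dist c w) (hcw2 : dist c w ≤ 0.8676)
    (hpw1 : 1 ≤ dist p' w) (hpw2 : dist p' w ≤ 1.0001)
    (hang : EuclideanGeometry.angle p' c w ≤ 17.5 * Real.pi / 180) :
    1.78 ≤ dist p' c :=
  stmt_12_general p' c w hcw1 hcw2 hpw1 hang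
end

section
/- There exist three points a, b, c in the Euclidean plane such that the three closed unit disks (radius 1) centered at a, b, c pairwise intersect with each pairwise lens width 2 − dist at least 0.265 (i.e., 2 − dist(a,b) ≥ 0.265, 2 − dist(b,c) ≥ 0.265, 2 − dist(c,a) ≥ 0.265), yet the three disks have no common point, i.e., there is no point x with dist(x, a) ≤ 1, dist(x, b) ≤ 1 and dist(x, c) ≤ 1. Hence disk arrangements with minimum lens width 0.265 can contain non-Helly triples. -/
/-! The three unit disks centred at the vertices of an equilateral triangle of side `1.735`
work. Pairwise lens widths are `2 - 1.735 = 0.265`. The disks have no common point since the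
sum of the squared distances from any point to the vertices is at least `s²` (it is minimised at
the centroid), while `1.735² > 3`. -/

section InnerProductSpace

variable {E : Type*} [NormedAddCommGroup E] [InnerProductSpace ℝ E]

theorem sum_dist_sq_le_three_mul_sum_dist_sq (x a b c : E) :
    dist a b ^ 2 + dist b c ^ 2 + dist c a ^ 2 ≤
      3 * (dist x a ^ 2 + dist x b ^ 2 + dist x c ^ 2) := by
  -- With `u, v, w` the vectors from the vertices to `x`, the defect is `‖u + v + w‖² ≥ 0`.
  have key : ∀ u v w : E,
      ‖v - u‖ ^ 2 + ‖w - v‖ ^ 2 + ‖u - w‖ ^ 2 + ‖u + v + w‖ ^ 2 =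
        3 * (‖u‖ ^ 2 + ‖v‖ ^ 2 + ‖w‖ ^ 2) := by
    intro u v w
    rw [norm_add_sq_real, norm_add_sq_real, inner_add_left, norm_sub_sq_real, norm_sub_sq_real,
      norm_sub_sq_real, real_inner_comm u v, real_inner_comm v w]
    ring
  have hab : a - b = (x - b) - (x - a) := by abel
  have hbc : b - c = (x - c) - (x - b) := by abel
  have hca : c - a = (x - a) - (x - c) := by abel
  simp only [dist_eq_norm, hab, hbc, hca]
  nlinarith [key (x - a) (x - b) (x - c), sq_nonneg ‖x - a + (x - b) + (x - c)‖]

theorem not_exists_forall_dist_le_of_sum_dist_sq_gt {a b c : E} {r : ℝ}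
    (h : 9 * r ^ 2 < dist a b ^ 2 + dist b c ^ 2 + dist c a ^ 2) :
    ¬ ∃ x : E, dist x a ≤ r ∧ dist x b ≤ r ∧ dist x c ≤ r := by
  rintro ⟨x, hxa, hxb, hxc⟩
  have hsq : ∀ y : E, dist x y ≤ r → dist x y ^ 2 ≤ r ^ 2 := fun y hy =>
    pow_le_pow_left₀ dist_nonneg hy 2
  linarith [sum_dist_sq_le_three_mul_sum_dist_sq x a b c, hsq a hxa, hsq b hxb, hsq c hxc]

end InnerProductSpace

theorem EuclideanSpace.dist_two (p q r u : ℝ) :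
    dist !₂[p, q] !₂[r, u] = √((p - r) ^ 2 + (q - u) ^ 2) := by
  simp [EuclideanSpace.dist_eq, Fin.sum_univ_two, Real.dist_eq, sq_abs]

theorem exists_equilateral_triangle {s : ℝ} (hs : 0 ≤ s) :
    ∃ a b c : EuclideanSpace ℝ (Fin 2), dist a b = s ∧ dist b c = s ∧ dist c a = s := by
  have h3 : √3 ^ 2 = 3 := Real.sq_sqrt (by norm_num)
  refine ⟨!₂[0, 0], !₂[s, 0], !₂[s / 2, s * √3 / 2], ?_, ?_, ?_⟩ <;>
    rw [EuclideanSpace.dist_two, Real.sqrt_eq_iff_eq_sq (by positivity) hs]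
  · ring
  · linear_combination (s ^ 2 / 4) * h3
  · linear_combination (s ^ 2 / 4) * h3

/-- There exist three unit disks that pairwise intersect with lens widths at
least 0.265 yet have no common point, i.e., they form a non-Helly triple. -/
theorem stmt_18 :
    ∃ a b c : EuclideanSpace ℝ (Fin 2),
      dist a b ≤ 2 ∧ dist b c ≤ 2 ∧ dist c a ≤ 2 ∧
      0.265 ≤ 2 - dist a b ∧ 0.265 ≤ 2 - dist b c ∧ 0.265 ≤ 2 - dist c a ∧
      ¬ ∃ x : EuclideanSpace ℝ (Fin 2),
        dist x a ≤ 1 ∧ dist x b ≤ 1 ∧ dist x c ≤ 1 := by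
  obtain ⟨a, b, c, hab, hbc, hca⟩ := exists_equilateral_triangle (s := 1.735) (by norm_num)
  refine ⟨a, b, c, ?_, ?_, ?_, ?_, ?_, ?_, not_exists_forall_dist_le_of_sum_dist_sq_gt ?_⟩ <;>
    norm_num [hab, hbc, hca]
end
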